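/- Let f_k(r) = r·β_k·β_{k-2}·( (1 - β_{k-1}(1+r))²/(1+2r) + β_{k-3}·r·(1-β_{k-1})²/(1+r) ) where βₙ = (1/β₊)(1-βⁿ)/(1-βⁿ⁺¹), β₊ = (1+√(1+4r))/2, β = (1-√(1+4r))/(1+√(1+4r)). Then for every r ∈ (0, 25], one has sup_{k≥4} f_k(r) < 1/3. -/

import Mathlib

noncomputable def betaPlus (r : ℝ) : ℝ := (1 + Real.sqrt (1 + 4 * r)) / 2

noncomputable def betaQ (r : ℝ) : ℝ :=
  (1 - Real.sqrt (1 + 4 * r)) / (1 + Real.sqrt (1 + 4 * r))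

/-- βₙ = (1/β₊)·(1-βⁿ)/(1-βⁿ⁺¹) -/
noncomputable def betaSeq (r : ℝ) (n : ℕ) : ℝ :=
  (1 / betaPlus r) * (1 - betaQ r ^ n) / (1 - betaQ r ^ (n + 1))

/-- The function f_k(r) from the martingale-method bound. -/
noncomputable def fK (r : ℝ) (k : ℕ) : ℝ :=
  r * betaSeq r k * betaSeq r (k - 2) *
    ((1 - betaSeq r (k - 1) * (1 + r)) ^ 2 / (1 + 2 * r)
      + betaSeq r (k - 3) * (r * (1 - betaSeq r (k - 1)) ^ 2 / (1 + r)))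

/-- Auxiliary Fibonacci-like sequence: F₀ = 0, F₁ = 1, F_{n+2} = F_{n+1} + r·F_n. -/
noncomputable def fibG (r : ℝ) : ℕ → ℝ
  | 0 => 0
  | 1 => 1
  | n + 2 => fibG r (n + 1) + r * fibG r n

lemma fibG_zero (r : ℝ) : fibG r 0 = 0 := rfl
lemma fibG_one (r : ℝ) : fibG r 1 = 1 := rfl
lemma fibG_add_two (r : ℝ) (n : ℕ) :
    fibG r (n + 2) = fibG r (n + 1) + r * fibG r n := rfl

set_option maxHeartbeats 1000000 in
/-- sup_{k ≥ 4} f_k(r) < 1/3 for 0 < r ≤ 25. -/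
theorem stmt_15 (r : ℝ) (hr0 : 0 < r) (hr : r ≤ 25) :
    sSup {x : ℝ | ∃ k : ℕ, 4 ≤ k ∧ x = fK r k} < 1 / 3 := by
  have h4r : (0:ℝ) ≤ 1 + 4 * r := by linarith
  set s0 := Real.sqrt (1 + 4 * r) with hs0def
  have hs0sq : s0 ^ 2 = 1 + 4 * r := Real.sq_sqrt h4r
  have hs0nn : 0 ≤ s0 := Real.sqrt_nonneg _
  have hs0gt : 1 < s0 := by nlinarith
  have hbp : betaPlus r = (1 + s0) / 2 := by
    show (1 + Real.sqrt (1 + 4 * r)) / 2 = (1 + s0) / 2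
    rw [hs0def]
  have hbq : betaQ r = ((1 - s0) / 2) / ((1 + s0) / 2) := by
    show (1 - Real.sqrt (1 + 4 * r)) / (1 + Real.sqrt (1 + 4 * r)) = _
    rw [← hs0def]
    have h1 : (1 + s0) ≠ 0 := by linarith
    field_simp
  have hbpne : ((1 + s0) / 2 : ℝ) ≠ 0 := by positivity
  -- β₊² = β₊ + r  and  β₋² = β₋ + r
  have hbp2 : ((1 + s0) / 2 : ℝ) ^ 2 = (1 + s0) / 2 + r := by
    linear_combination hs0sq / 4
  have hbm2 : ((1 - s0) / 2 : ℝ) ^ 2 = (1 - s0) / 2 + r := by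
    linear_combination hs0sq / 4
  -- closed form for fibG
  have hclosed : ∀ n : ℕ,
      s0 * fibG r n = ((1 + s0) / 2) ^ n - ((1 - s0) / 2) ^ n := by
    have key : ∀ n : ℕ,
        s0 * fibG r n = ((1 + s0) / 2) ^ n - ((1 - s0) / 2) ^ n ∧
        s0 * fibG r (n + 1) = ((1 + s0) / 2) ^ (n + 1) - ((1 - s0) / 2) ^ (n + 1) := by
      intro n
      induction n with
      | zero =>
        constructor
        · simp [fibG_zero]
        · simp only [zero_add, pow_one, fibG_one, mul_one]
          ring
      | succ n ih =>
        refine ⟨ih.2, ?_⟩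
        rw [fibG_add_two]
        linear_combination ih.2 + r * ih.1 - ((1 + s0) / 2) ^ n * hbp2 +
          ((1 - s0) / 2) ^ n * hbm2
    exact fun n => (key n).1
  -- positivity of fibG
  have hfib : ∀ n : ℕ, 0 ≤ fibG r n ∧ 0 < fibG r (n + 1) := by
    intro n
    induction n with
    | zero => exact ⟨le_refl 0, by norm_num [fibG_one]⟩
    | succ n ih =>
      refine ⟨ih.2.le, ?_⟩
      rw [fibG_add_two]
      exact add_pos_of_pos_of_nonneg ih.2 (mul_nonneg hr0.le ih.1)
  have hs0ne : s0 ≠ 0 := by linarith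
  -- betaSeq as a ratio of fibG's
  have hqpow : ∀ n : ℕ, 1 - betaQ r ^ n = s0 * fibG r n / ((1 + s0) / 2) ^ n := by
    intro n
    rw [hbq, div_pow, hclosed n]
    field_simp
  have hbeta : ∀ n : ℕ, betaSeq r n = fibG r n / fibG r (n + 1) := by
    intro n
    have hfn1 : fibG r (n + 1) ≠ 0 := (hfib n).2.ne'
    rw [betaSeq, hbp, hqpow n, hqpow (n + 1)]
    field_simp
    ring
  -- the main bound: fK r k ≤ 333/1000 for k ≥ 4
  have hbound : ∀ k : ℕ, 4 ≤ k → fK r k ≤ 333 / 1000 := by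
    intro k hk
    obtain ⟨m, rfl⟩ : ∃ m, k = m + 4 := ⟨k - 4, by omega⟩
    have hApos : 0 < fibG r (m + 1) := (hfib m).2
    have hBpos : 0 < fibG r (m + 2) := (hfib (m + 1)).2
    set A := fibG r (m + 1) with hAdef
    set B := fibG r (m + 2) with hBdef
    have q2 : fibG r (m + 1 + 1) = B := by rw [show m + 1 + 1 = m + 2 from by omega]
    have q3 : fibG r (m + 2 + 1) = B + r * A := by
      rw [show m + 2 + 1 = m + 1 + 2 from by omega, fibG_add_two]
      try rw [show m + 1 + 1 = m + 2 from by omega]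
      try ring
    have q3' : fibG r (m + 3) = B + r * A := by
      rw [show m + 3 = m + 2 + 1 from by omega]; exact q3
    have q4 : fibG r (m + 3 + 1) = (1 + r) * B + r * A := by
      rw [show m + 3 + 1 = m + 2 + 2 from by omega, fibG_add_two, q3]
      ring
    have q4' : fibG r (m + 4) = (1 + r) * B + r * A := by
      rw [show m + 4 = m + 3 + 1 from by omega]; exact q4
    have q5 : fibG r (m + 4 + 1) = (1 + 2 * r) * B + r * (1 + r) * A := by
      rw [show m + 4 + 1 = m + 3 + 2 from by omega, fibG_add_two, q4, q3']
      ring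
    have h1r : (0:ℝ) < 1 + r := by linarith
    have h12r : (0:ℝ) < 1 + 2 * r := by linarith
    have hD1 : (0:ℝ) < B + r * A := by positivity
    have hD2 : (0:ℝ) < (1 + r) * B + r * A := by positivity
    have hD3 : (0:ℝ) < (1 + 2 * r) * B + r * (1 + r) * A := by positivity
    have hfk : fK r (m + 4) =
        r ^ 4 * A * B /
          ((1 + r) * (1 + 2 * r) * (B + r * A) * ((1 + r) * B + r * A)) := by
      rw [fK, show m + 4 - 1 = m + 3 from by omega,
        show m + 4 - 2 = m + 2 from by omega,
        show m + 4 - 3 = m + 1 from by omega,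
        hbeta (m + 4), hbeta (m + 3), hbeta (m + 2), hbeta (m + 1)]
      simp only [q2, q3, q3', q4, q4', q5, ← hAdef, ← hBdef]
      field_simp [hD1.ne', hD2.ne', hD3.ne', hBpos.ne', h1r.ne', h12r.ne']
      ring
    rw [hfk, div_le_iff₀ (by positivity)]
    -- introduce s = √(1+r)
    set s := Real.sqrt (1 + r) with hsdef
    have hs2 : s ^ 2 = 1 + r := Real.sq_sqrt (by linarith)
    have hsnn : 0 ≤ s := Real.sqrt_nonneg _
    have hs1 : 1 ≤ s := by nlinarith
    have hsu : s ≤ 51 / 10 := by nlinarith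
    -- univariate bound: 1000 r³ ≤ 333 (1+r)(1+2r)(r+2+2s)
    have hu : (0:ℝ) ≤ s - 1 := by linarith
    have hw : (0:ℝ) ≤ 51 / 10 - s := by linarith
    have hH : (0:ℝ) ≤ 333 * s ^ 2 * (2 * s ^ 2 - 1) - 1000 * (s - 1) ^ 3 * (s + 1) := by
      linarith [mul_nonneg (sq_nonneg (51 / 10 - s)) (sq_nonneg (51 / 10 - s)),
        sq_nonneg (s - 1),
        mul_nonneg (mul_nonneg hu hw) (sq_nonneg s),
        mul_nonneg hu hsnn,
        mul_nonneg (mul_nonneg hu hw) hsnn]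
    have hG : 1000 * r ^ 3 ≤ 333 * (1 + r) * (1 + 2 * r) * (r + 2 + 2 * s) := by
      have hrr : r = s ^ 2 - 1 := by linarith
      rw [hrr]
      linarith [mul_nonneg hH (sq_nonneg (s + 1))]
    -- AM–GM step
    have key1 : (r + 2 + 2 * s) * r * (A * B) ≤ (B + r * A) * ((1 + r) * B + r * A) := by
      have e : (B + r * A) * ((1 + r) * B + r * A) - (r + 2 + 2 * s) * r * (A * B)
          = (s * B - r * A) ^ 2 + ((1 + r) - s ^ 2) * B ^ 2 := by ring
      rw [hs2] at e
      linarith [sq_nonneg (s * B - r * A), e]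
    have key2 : (0:ℝ) ≤ r * (A * B) := by positivity
    have p1 : 1000 * r ^ 3 * (r * (A * B)) ≤
        333 * (1 + r) * (1 + 2 * r) * (r + 2 + 2 * s) * (r * (A * B)) :=
      mul_le_mul_of_nonneg_right hG key2
    have p2 : 333 * (1 + r) * (1 + 2 * r) * ((r + 2 + 2 * s) * r * (A * B)) ≤
        333 * (1 + r) * (1 + 2 * r) * ((B + r * A) * ((1 + r) * B + r * A)) :=
      mul_le_mul_of_nonneg_left key1 (by positivity)
    linarith [p1, p2]
  -- conclude about the supremum
  have hsup : sSup {x : ℝ | ∃ k : ℕ, 4 ≤ k ∧ x = fK r k} ≤ 333 / 1000 := by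
    apply Real.sSup_le
    · rintro x ⟨k, hk, rfl⟩
      exact hbound k hk
    · norm_num
  linarith
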